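/- Let G be a prime 3^{+1}-rank-connected graph with a triplet {a,b,c}. Let (X,Y) be a partition of V(G)−{a} with ρ_{G∖a}(X) = 2 and |X|, |Y| ≥ 5. Then exactly one of b, c lies in X, and moreover ρ_G(X−{b,c}, Y∪{a}) = ρ_G(X∪{a}, Y−{b,c}) = 3. -/

import Mathlib

open Finset

variable {V : Type} [Fintype V] [DecidableEq V]

open scoped Classical

/-- The rank over GF(2) of the `X × Y` submatrix of the adjacency matrix of `G`. -/
noncomputable def cutRankOn (G : SimpleGraph V) (X Y : Finset V) : ℕ :=
  (Matrix.of (fun (i : ↥X) (j : ↥Y) => if G.Adj i.1 j.1 then (1 : ZMod 2) else 0)).rank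

/-- The cut-rank of `X` in the graph `G` restricted to the vertex set `S`:
the rank over GF(2) of the `X × (S \ X)` submatrix of the adjacency matrix. -/
noncomputable def cutRank (G : SimpleGraph V) (S X : Finset V) : ℕ :=
  cutRankOn G X (S \ X)

/-- `A` gives a split of the graph `G` restricted to the vertex set `S`. -/
def IsSplit (G : SimpleGraph V) (S A : Finset V) : Prop :=
  A ⊆ S ∧ cutRank G S A ≤ 1 ∧ 2 ≤ A.card ∧ 2 ≤ (S \ A).card

/-- The graph `G` restricted to the vertex set `S` is prime: connected and with no split. -/
def IsPrime (G : SimpleGraph V) (S : Finset V) : Prop :=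
  (G.induce (↑S : Set V)).Connected ∧ ∀ A, ¬ IsSplit G S A

/-- `G` restricted to `S` is `k⁺ˡ`-rank-connected. -/
def RankConn (G : SimpleGraph V) (S : Finset V) (k l : ℤ) : Prop :=
  ∀ X ⊆ S, (cutRank G S X : ℤ) < k →
    min (X.card : ℤ) (((S \ X).card : ℤ)) < k + l

/-- `G` restricted to `S` is `k`-rank-connected. -/
def RankConnAll (G : SimpleGraph V) (S : Finset V) (k : ℤ) : Prop :=
  ∀ m : ℤ, m ≤ k → RankConn G S m 0

def SideA (G : SimpleGraph V) (v w x : V) : Prop := G.Adj v x ∧ ¬ G.Adj w x ∧ x ≠ w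
def SideB (G : SimpleGraph V) (v w x : V) : Prop := G.Adj w x ∧ ¬ G.Adj v x ∧ x ≠ v
def SideC (G : SimpleGraph V) (v w x : V) : Prop := G.Adj v x ∧ G.Adj w x

/-- `x` and `y` lie in different ones among the three sets
`N(v)−N(w)−{w}`, `N(w)−N(v)−{v}`, `N(v)∩N(w)`. -/
def PivotToggle (G : SimpleGraph V) (v w x y : V) : Prop :=
  (SideA G v w x ∧ SideB G v w y) ∨ (SideB G v w x ∧ SideA G v w y) ∨
  (SideA G v w x ∧ SideC G v w y) ∨ (SideC G v w x ∧ SideA G v w y) ∨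
  (SideB G v w x ∧ SideC G v w y) ∨ (SideC G v w x ∧ SideB G v w y)

set_option linter.unusedSectionVars false in
lemma pivotToggle_symm {G : SimpleGraph V} {v w x y : V}
    (h : PivotToggle G v w x y) : PivotToggle G v w y x := by
  unfold PivotToggle at h ⊢; tauto

/-- The graph `G ∧ vw` obtained by pivoting the edge `vw`: toggle adjacency across the
three sets and swap the labels of `v` and `w`. -/
def pivot (G : SimpleGraph V) (v w : V) : SimpleGraph V where
  Adj a b := a ≠ b ∧
    Xor' (G.Adj (Equiv.swap v w a) (Equiv.swap v w b))
         (PivotToggle G v w (Equiv.swap v w a) (Equiv.swap v w b))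
  symm := by
    constructor
    intro a b h
    obtain ⟨hne, hx⟩ := h
    refine ⟨hne.symm, ?_⟩
    have hA : G.Adj (Equiv.swap v w b) (Equiv.swap v w a) ↔
        G.Adj (Equiv.swap v w a) (Equiv.swap v w b) := SimpleGraph.adj_comm _ _ _
    have hT : PivotToggle G v w (Equiv.swap v w b) (Equiv.swap v w a) ↔
        PivotToggle G v w (Equiv.swap v w a) (Equiv.swap v w b) :=
      ⟨pivotToggle_symm, pivotToggle_symm⟩
    rw [hA, hT]
    exact hx
  loopless := by constructor; intro a h; exact h.1 rfl

/-- One pivot step along an edge. -/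
def PivotStep (G H : SimpleGraph V) : Prop := ∃ v w, G.Adj v w ∧ H = pivot G v w

/-- Pivot-equivalence: a sequence of pivots. -/
def PivotEquiv : SimpleGraph V → SimpleGraph V → Prop := Relation.ReflTransGen PivotStep

/-- `A` is a fully closed set of `G` restricted to `S`. -/
def FullyClosed (G : SimpleGraph V) (S A : Finset V) : Prop :=
  A ⊆ S ∧ cutRank G S A = 2 ∧ 2 < A.card ∧
    ∀ u ∈ S, u ∉ A → cutRank G S A < cutRank G S (insert u A)

/-- `{a,b,c}` is a triplet of `G` (on vertex set `univ`). -/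
def Triplet (G : SimpleGraph V) (a b c : V) : Prop :=
  cutRank G Finset.univ {a, b, c} = 2 ∧
  ∀ x ∈ ({a, b, c} : Finset V),
    cutRank G (Finset.univ \ {x}) (({a, b, c} : Finset V) \ {x}) = 2

/-- `B` is a `k`-branched set of `G` restricted to `S`. -/
inductive KBranched (G : SimpleGraph V) (S : Finset V) (k : ℕ) : Finset V → Prop
  | single (v : V) (hv : v ∈ S) (h : cutRank G S {v} ≤ k) : KBranched G S k {v}
  | split (B B' : Finset V) (hB : B ⊆ S) (h : cutRank G S B ≤ k)
      (h1 : B' ⊆ B) (h2 : B'.Nonempty) (h3 : B' ≠ B)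
      (hb1 : KBranched G S k B') (hb2 : KBranched G S k (B \ B')) : KBranched G S k B

/-- The rank-width of `G` restricted to `S`: the least `k` such that `S` is `k`-branched
(equivalently, the minimum width of a rank-decomposition). -/
noncomputable def rankWidth (G : SimpleGraph V) (S : Finset V) : ℕ :=
  sInf {k | S = ∅ ∨ KBranched G S k S}

/-- `A` is a titanic set of `G` restricted to `S`. -/
def Titanic (G : SimpleGraph V) (S A : Finset V) : Prop :=
  ∀ A1 A2 A3 : Finset V, A1 ∪ A2 ∪ A3 = A →
    Disjoint A1 A2 → Disjoint A1 A3 → Disjoint A2 A3 →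
    cutRank G S A ≤ cutRank G S A1 ∨ cutRank G S A ≤ cutRank G S A2 ∨
      cutRank G S A ≤ cutRank G S A3

/-! Over GF(2), the triplet condition says that the columns of `a`, `b`, `c` on the remaining
vertices are pairwise independent but span only a plane, so `col a = col b + col c` on every row
outside `{a, b, c}`. By `3⁺¹`-rank-connectivity, adding `a` to either side of the rank-2
separation `(X, Y)` of `G ∖ a` raises the rank to 3; if `b` and `c` were on the same side, the
column of `a` would already be spanned from that side and the rank would stay 2. So, say, `b ∈ X`
and `c ∈ Y`. On the rows `X − b` the column of `b` is `col a + col c`, so moving `b` to the side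
of `a` does not change the rank, and rank-connectivity applied to `X − b` gives rank 3 again. -/

open Submodule Module

noncomputable def adjColumn {U : Type} (G : SimpleGraph U) (X : Finset U) (u : U) : X → ZMod 2 :=
  fun i => if G.Adj i u then 1 else 0

section CutRankOn

variable {U : Type} (G : SimpleGraph U)

theorem cutRankOn_eq_finrank_span (X Y : Finset U) :
    cutRankOn G X Y = finrank (ZMod 2) (span (ZMod 2) (adjColumn G X '' Y)) := by
  have hcols : (Matrix.of fun (i : X) (j : Y) => if G.Adj i j then (1 : ZMod 2) else 0).col =
      adjColumn G X ∘ (↑) := rfl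
  have hrange : Set.range (adjColumn G X ∘ ((↑) : Y → U)) = adjColumn G X '' Y := by
    rw [Set.range_comp, Subtype.range_coe]
  rw [cutRankOn, Matrix.rank_eq_finrank_span_cols, hcols, hrange]

theorem cutRankOn_comm (X Y : Finset U) : cutRankOn G X Y = cutRankOn G Y X := by
  rw [cutRankOn, ← Matrix.rank_transpose]
  congr 1
  ext i j
  exact if_congr (G.adj_comm _ _) rfl rfl

theorem cutRankOn_le_card_left (X Y : Finset U) : cutRankOn G X Y ≤ X.card :=
  (Matrix.rank_le_card_height _).trans_eq (Fintype.card_coe X)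

theorem cutRankOn_mono_left {X₁ X₂ : Finset U} (h : X₁ ⊆ X₂) (Y : Finset U) :
    cutRankOn G X₁ Y ≤ cutRankOn G X₂ Y := by
  rw [cutRankOn_comm G X₁, cutRankOn_comm G X₂, cutRankOn_eq_finrank_span,
    cutRankOn_eq_finrank_span]
  exact finrank_mono (span_mono (Set.image_mono h))

theorem cutRankOn_insert_le [DecidableEq U] (X Y : Finset U) (u : U) :
    cutRankOn G X (insert u Y) ≤ cutRankOn G X Y + 1 := by
  rw [cutRankOn_eq_finrank_span, cutRankOn_eq_finrank_span, coe_insert, Set.image_insert_eq,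
    span_insert, add_comm]
  refine (finrank_add_le_finrank_add_finrank _ _).trans (Nat.add_le_add_right ?_ _)
  exact (finrank_span_le_card _).trans (by simp)

theorem cutRankOn_insert_of_mem_span [DecidableEq U] {X Y : Finset U} {u : U}
    (h : adjColumn G X u ∈ span (ZMod 2) (adjColumn G X '' Y)) :
    cutRankOn G X (insert u Y) = cutRankOn G X Y := by
  rw [cutRankOn_eq_finrank_span, cutRankOn_eq_finrank_span, coe_insert, Set.image_insert_eq,
    span_insert_eq_span h]

end CutRankOn

theorem eq_add_of_finrank_span_eq_two {M : Type*} [AddCommGroup M] [Module (ZMod 2) M]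
    {u v w : M} (h : finrank (ZMod 2) (span (ZMod 2) {u, v, w}) = 2)
    (huv : finrank (ZMod 2) (span (ZMod 2) {u, v}) = 2)
    (huw : finrank (ZMod 2) (span (ZMod 2) {u, w}) = 2)
    (hvw : finrank (ZMod 2) (span (ZMod 2) {v, w}) = 2) : u = v + w := by
  have : FiniteDimensional (ZMod 2) (span (ZMod 2) {u, v, w}) :=
    FiniteDimensional.span_of_finite _ (Set.toFinite _)
  have hspan : span (ZMod 2) {v, w} = span (ZMod 2) {u, v, w} :=
    eq_of_le_of_finrank_le (span_mono (Set.subset_insert _ _)) (by rw [h, hvw])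
  obtain ⟨s, t, hu⟩ := mem_span_pair.1 (hspan ▸ subset_span (Set.mem_insert u {v, w}))
  have finrank_span_singleton_le (x : M) : finrank (ZMod 2) (span (ZMod 2) {x}) ≤ 1 :=
    (finrank_span_le_card _).trans (by simp)
  have hZMod2 : ∀ x : ZMod 2, x = 0 ∨ x = 1 := by decide
  -- `u = s • v + t • w` is one of `0, w, v, v + w`, and the first three collapse a pair.
  rcases hZMod2 s with rfl | rfl <;> rcases hZMod2 t with rfl | rfl <;>
    simp only [zero_smul, one_smul, zero_add, add_zero] at hu <;> subst hu
  · rw [span_insert_zero] at huv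
    have := finrank_span_singleton_le v
    omega
  · rw [Set.pair_eq_singleton] at huw
    have := finrank_span_singleton_le w
    omega
  · rw [Set.pair_eq_singleton] at huv
    have := finrank_span_singleton_le v
    omega
  · rfl

section Triplet

variable {G : SimpleGraph V} {a b c : V}

theorem Triplet.swap (ht : Triplet G a b c) : Triplet G a c b := by
  unfold Triplet at ht ⊢
  rwa [pair_comm c b]

theorem Triplet.three_le_card (ht : Triplet G a b c) : 3 ≤ ({a, b, c} : Finset V).card := by
  have h := ht.2 a (mem_insert_self _ _)
  have hle := cutRankOn_le_card_left G ({a, b, c} \ {a}) ((univ \ {a}) \ ({a, b, c} \ {a}))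
  rw [cutRank, sdiff_singleton_eq_erase] at h
  rw [sdiff_singleton_eq_erase, card_erase_of_mem (mem_insert_self _ _)] at hle
  omega

theorem Triplet.pairwise_ne (ht : Triplet G a b c) : a ≠ b ∧ a ≠ c ∧ b ≠ c := by
  have h := ht.three_le_card
  refine ⟨?_, ?_, ?_⟩ <;> rintro rfl <;>
    simp only [mem_insert, mem_singleton, true_or, or_true, insert_eq_of_mem] at h <;>
    exact absurd (h.trans card_le_two) (by norm_num)

theorem Triplet.adjColumn_eq_add (ht : Triplet G a b c) {Z : Finset V}
    (hZ : Disjoint Z {a, b, c}) : adjColumn G Z a = adjColumn G Z b + adjColumn G Z c := by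
  obtain ⟨hab, hac, hbc⟩ := ht.pairwise_ne
  set W := univ \ {a, b, c}
  have hrank (S : Finset V) :
      cutRankOn G S W = finrank (ZMod 2) (span (ZMod 2) (adjColumn G W '' S)) := by
    rw [cutRankOn_comm, cutRankOn_eq_finrank_span]
  have hpair (x y z : V) (hx : x ∈ ({a, b, c} : Finset V))
      (hyz : ({a, b, c} : Finset V) \ {x} = {y, z}) :
      finrank (ZMod 2) (span (ZMod 2) {adjColumn G W y, adjColumn G W z}) = 2 := by
    have hW : (univ \ {x}) \ ({a, b, c} \ {x}) = W := by
      ext v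
      simp only [mem_sdiff, mem_univ, true_and, mem_singleton, W]
      grind
    have h := ht.2 x hx
    rwa [cutRank, hW, hyz, hrank, coe_pair, Set.image_pair] at h
  have htriple : finrank (ZMod 2)
      (span (ZMod 2) {adjColumn G W a, adjColumn G W b, adjColumn G W c}) = 2 := by
    have h := ht.1
    rwa [cutRank, hrank, coe_insert, coe_pair, Set.image_insert_eq, Set.image_pair] at h
  have hW := eq_add_of_finrank_span_eq_two htriple (hpair c a b (by simp) (by grind))
    (hpair b a c (by simp) (by grind)) (hpair a b c (by simp) (by grind))
  funext i
  exact congrFun hW ⟨i, mem_sdiff.2 ⟨mem_univ _, disjoint_left.1 hZ i.2⟩⟩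

end Triplet

theorem compl_eq_insert_of_union_eq {a : V} {X Y : Finset V} (hXY : X ∪ Y = univ \ {a})
    (hd : Disjoint X Y) : univ \ X = insert a Y := by
  ext x
  have hx := congrArg (x ∈ ·) hXY
  simp only [mem_union, mem_sdiff, mem_univ, mem_singleton, true_and, eq_iff_iff] at hx
  simp only [mem_sdiff, mem_univ, true_and, mem_insert]
  grind [disjoint_left]

theorem RankConn.three_le_cutRank {G : SimpleGraph V} (h31 : RankConn G univ 3 1)
    {Z : Finset V} (hZ : 4 ≤ Z.card) (hZc : 4 ≤ (univ \ Z).card) : 3 ≤ cutRank G univ Z := by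
  by_contra! h
  have := h31 Z (subset_univ Z) (by exact_mod_cast h)
  omega

section Separation

variable {G : SimpleGraph V} {a b c : V} {X Y : Finset V}

theorem cutRankOn_insert_eq_three (h31 : RankConn G univ 3 1) (hcompl : univ \ X = insert a Y)
    (hXY : cutRankOn G X Y = 2) (hX : 4 ≤ X.card) (hY : 4 ≤ Y.card) :
    cutRankOn G X (insert a Y) = 3 := by
  have hlow := h31.three_le_cutRank hX (hcompl ▸ hY.trans (card_le_card (subset_insert a Y)))
  rw [cutRank, hcompl] at hlow
  have := cutRankOn_insert_le G X Y a
  omega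

theorem Triplet.notMem_of_mem (ht : Triplet G a b c) (hcompl : univ \ X = insert a Y)
    (hXY : cutRankOn G X Y = 2) (hX3 : cutRankOn G X (insert a Y) = 3) (hb : b ∈ Y) :
    c ∉ Y := by
  intro hc
  have hsub : {a, b, c} ⊆ univ \ X :=
    hcompl ▸ insert_subset_insert a (insert_subset hb (singleton_subset_iff.2 hc))
  have hdisj : Disjoint X {a, b, c} := disjoint_sdiff.mono_right hsub
  have hspan : adjColumn G X a ∈ span (ZMod 2) (adjColumn G X '' Y) := by
    rw [ht.adjColumn_eq_add hdisj]
    exact add_mem (subset_span ⟨b, hb, rfl⟩) (subset_span ⟨c, hc, rfl⟩)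
  have := cutRankOn_insert_of_mem_span G hspan
  omega

theorem Triplet.cutRankOn_erase_insert_eq_three (h31 : RankConn G univ 3 1)
    (ht : Triplet G a b c) (hcompl : univ \ X = insert a Y) (hb : b ∈ X) (hc : c ∈ Y)
    (hX3 : cutRankOn G X (insert a Y) = 3) (hX : 5 ≤ X.card) (hY : 4 ≤ Y.card) :
    cutRankOn G (X.erase b) (insert a Y) = 3 := by
  have hout : Disjoint X (insert a Y) := hcompl ▸ disjoint_sdiff
  have hcompl' : univ \ X.erase b = insert b (insert a Y) := by
    rw [← hcompl]
    ext
    simp only [mem_sdiff, mem_univ, true_and, mem_erase, mem_insert]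
    tauto
  have hdisj : Disjoint (X.erase b) {a, b, c} := by
    simp [disjoint_insert_right, disjoint_right.1 hout (mem_insert_self a Y),
      disjoint_right.1 hout (mem_insert_of_mem hc)]
  have hspan : adjColumn G (X.erase b) b ∈
      span (ZMod 2) (adjColumn G (X.erase b) '' ↑(insert a Y)) := by
    rw [eq_sub_of_add_eq (ht.adjColumn_eq_add hdisj).symm, ZModModule.sub_eq_add]
    exact add_mem (subset_span ⟨a, mem_insert_self a Y, rfl⟩)
      (subset_span ⟨c, mem_insert_of_mem hc, rfl⟩)
  have hcard : 4 ≤ (univ \ X.erase b).card := by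
    rw [hcompl']
    exact hY.trans ((card_le_card (subset_insert a Y)).trans (card_le_card (subset_insert _ _)))
  have hlow := h31.three_le_cutRank (by rw [card_erase_of_mem hb]; omega) hcard
  rw [cutRank, hcompl', cutRankOn_insert_of_mem_span G hspan] at hlow
  have := cutRankOn_mono_left G (erase_subset b X) (insert a Y)
  omega

theorem Triplet.cutRankOn_sdiff_pair_eq_three (h31 : RankConn G univ 3 1)
    (ht : Triplet G a b c) (hcompl : univ \ X = insert a Y) (hXY : cutRankOn G X Y = 2)
    (hX : 5 ≤ X.card) (hY : 4 ≤ Y.card) (hbc : b ∈ X ∧ c ∈ Y ∨ c ∈ X ∧ b ∈ Y) :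
    cutRankOn G (X \ {b, c}) (insert a Y) = 3 := by
  have hX3 := cutRankOn_insert_eq_three h31 hcompl hXY (by omega) hY
  have hdisj : Disjoint X Y :=
    (hcompl ▸ disjoint_sdiff : Disjoint X (insert a Y)).mono_right (subset_insert a Y)
  rcases hbc with ⟨hb, hc⟩ | ⟨hc, hb⟩
  · rw [sdiff_insert, sdiff_singleton_eq_erase,
      erase_eq_of_notMem (disjoint_right.1 hdisj hc)]
    exact ht.cutRankOn_erase_insert_eq_three h31 hcompl hb hc hX3 hX hY
  · rw [pair_comm, sdiff_insert, sdiff_singleton_eq_erase,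
      erase_eq_of_notMem (disjoint_right.1 hdisj hb)]
    exact ht.swap.cutRankOn_erase_insert_eq_three h31 hcompl hc hb hX3 hX hY

end Separation

theorem triplet_sep_general {G : SimpleGraph V}
    (h31 : RankConn G Finset.univ 3 1)
    {a b c : V}
    (ht : Triplet G a b c)
    {X Y : Finset V} (hXY : X ∪ Y = Finset.univ \ {a}) (hd : Disjoint X Y)
    (hrX : cutRank G (Finset.univ \ {a}) X = 2) (h5X : 5 ≤ X.card) (h5Y : 5 ≤ Y.card) :
    (X ∩ {b, c}).card = 1 ∧
      cutRankOn G (X \ {b, c}) (Y ∪ {a}) = 3 ∧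
      cutRankOn G (X ∪ {a}) (Y \ {b, c}) = 3 := by
  have hcX := compl_eq_insert_of_union_eq hXY hd
  have hcY := compl_eq_insert_of_union_eq (union_comm X Y ▸ hXY) hd.symm
  have hXY2 : cutRankOn G X Y = 2 := by
    rwa [cutRank, ← hXY, union_sdiff_left, sdiff_eq_self_of_disjoint hd.symm] at hrX
  have hYX2 : cutRankOn G Y X = 2 := (cutRankOn_comm G Y X).trans hXY2
  have hnotY := ht.notMem_of_mem hcX hXY2
    (cutRankOn_insert_eq_three h31 hcX hXY2 (by omega) (by omega))
  have hnotX := ht.notMem_of_mem hcY hYX2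
    (cutRankOn_insert_eq_three h31 hcY hYX2 (by omega) (by omega))
  obtain ⟨hab, hac, -⟩ := ht.pairwise_ne
  have hb : b ∈ X ∪ Y := by simp [hXY, hab.symm]
  have hc : c ∈ X ∪ Y := by simp [hXY, hac.symm]
  have hsplit : b ∈ X ∧ c ∈ Y ∨ c ∈ X ∧ b ∈ Y := by
    rw [mem_union] at hb hc
    grind [disjoint_left]
  refine ⟨?_, ?_, ?_⟩
  · rcases hsplit with ⟨hbX, hcY⟩ | ⟨hcX, hbY⟩
    · simp [hbX, disjoint_right.1 hd hcY]
    · simp [hcX, disjoint_right.1 hd hbY]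
  · rw [union_comm, ← insert_eq]
    exact ht.cutRankOn_sdiff_pair_eq_three h31 hcX hXY2 h5X (by omega) hsplit
  · rw [cutRankOn_comm, union_comm X, ← insert_eq]
    exact ht.cutRankOn_sdiff_pair_eq_three h31 hcY hYX2 h5Y (by omega)
      (hsplit.symm.imp And.symm And.symm)

theorem triplet_sep {G : SimpleGraph V} (hp : IsPrime G Finset.univ)
    (h31 : RankConn G Finset.univ 3 1)
    {a b c : V} (hab : a ≠ b) (hac : a ≠ c) (hbc : b ≠ c)
    (ht : Triplet G a b c)
    {X Y : Finset V} (hXY : X ∪ Y = Finset.univ \ {a}) (hd : Disjoint X Y)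
    (hrX : cutRank G (Finset.univ \ {a}) X = 2) (h5X : 5 ≤ X.card) (h5Y : 5 ≤ Y.card) :
    (X ∩ {b, c}).card = 1 ∧
      cutRankOn G (X \ {b, c}) (Y ∪ {a}) = 3 ∧
      cutRankOn G (X ∪ {a}) (Y \ {b, c}) = 3 :=
  triplet_sep_general h31 ht hXY hd hrX h5X h5Y
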